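/- Assume 0 < p < 1/2 (so p < q). Then the mean and second factorial moment of the reflected walk at the end of light cycles converge: lim_{m→∞} E(S_{2m}) = p²/(q - p), and lim_{m→∞} E(S_{2m}(S_{2m} - 1)) = 2p⁴/(q - p)². -/

import Mathlib

/-!
Write `F m k = P(S_{2m} ≥ k)`. Away from the barrier a light cycle moves the walk by `+1`, `0`, `-1`
with probabilities `p²`, `2pq`, `q²`, and each step is independent of the past, so
`F (m+1) (k+1) = p² F m k + 2pq F m (k+1) + q² F m (k+2)`, with `F m 0 = 1` and `F 0 (k+1) = 0`.
This recursion is monotone, so by comparison `F m k` increases in `m` and stays below its solution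
`r^k`, `r = (p/q)²`. The limit solves the stationary recursion, whose characteristic roots are `1`
and `r`; hence `r^k - lim F m k`, which vanishes at `k = 0` and lies in `[0, r^k]`, is a multiple of
`1 + r + ⋯ + r^(k-1)` and must vanish. The two moments are the tail sums `∑ F m (k+1)` and
`∑ 2k F m (k+1)`, and dominated convergence with the bound `r^(k+1)` gives `r/(1-r) = p²/(q-p)` and
`2r²/(1-r)² = 2p⁴/(q-p)²`.
-/

open MeasureTheory ProbabilityTheory Filter Topology

/-- If `f k` is the tail `P(S ≥ k)` at the start of a light cycle, `cycleStep p q f k` is the tail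
`P(S ≥ k + 1)` at its end. -/
def cycleStep (p q : ℝ) (f : ℕ → ℝ) (k : ℕ) : ℝ :=
  p ^ 2 * f k + 2 * p * q * f (k + 1) + q ^ 2 * f (k + 2)

section CycleStep

variable {p q : ℝ}

lemma ratio_sq_nonneg_lt_one (hp : 0 ≤ p) (hpq : p < q) : 0 ≤ (p / q) ^ 2 ∧ (p / q) ^ 2 < 1 := by
  have hq : 0 < q := by linarith
  refine ⟨by positivity, ?_⟩
  rw [div_pow, div_lt_one (by positivity)]
  nlinarith

lemma cycleStep_mono (hp : 0 ≤ p) (hq : 0 ≤ q) {f g : ℕ → ℝ} (hfg : f ≤ g) (k : ℕ) :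
    cycleStep p q f k ≤ cycleStep p q g k := by
  unfold cycleStep
  gcongr <;> apply hfg

lemma cycleStep_sub (f g : ℕ → ℝ) (k : ℕ) :
    cycleStep p q (f - g) k = cycleStep p q f k - cycleStep p q g k := by
  simp only [cycleStep, Pi.sub_apply]
  ring

lemma cycleStep_ratio_pow (hq : q ≠ 0) (hpq : p + q = 1) (k : ℕ) :
    cycleStep p q (fun k => ((p / q) ^ 2) ^ k) k = ((p / q) ^ 2) ^ (k + 1) := by
  have key : p ^ 2 + 2 * p * q * (p / q) ^ 2 + q ^ 2 * ((p / q) ^ 2) ^ 2 = (p / q) ^ 2 := by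
    field_simp
    linear_combination p ^ 2 * (p + q + 1) * hpq
  simp only [cycleStep]
  linear_combination ((p / q) ^ 2) ^ k * key

lemma sub_succ_eq_of_cycleStep (hq : q ≠ 0) (hpq : p + q = 1) {f : ℕ → ℝ}
    (hf : ∀ k, f (k + 1) = cycleStep p q f k) (k : ℕ) :
    f (k + 2) - f (k + 1) = (p / q) ^ 2 * (f (k + 1) - f k) := by
  have h := hf k
  simp only [cycleStep] at h
  rw [div_pow, div_mul_eq_mul_div, eq_div_iff (pow_ne_zero 2 hq)]
  linear_combination -h + (-(p + q + 1) * f (k + 1)) * hpq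

lemma eq_zero_of_cycleStep (hp : 0 ≤ p) (hpq : p < q) (hsum : p + q = 1) {D : ℕ → ℝ}
    (hD : ∀ k, D (k + 1) = cycleStep p q D k) (hD0 : D 0 = 0) (hD_nonneg : 0 ≤ D)
    (hD_le : ∀ k, D k ≤ ((p / q) ^ 2) ^ k) : D = 0 := by
  have hq : 0 < q := by linarith
  obtain ⟨hr0, hr1⟩ := ratio_sq_nonneg_lt_one hp hpq
  have hincr : ∀ k, D (k + 1) - D k = ((p / q) ^ 2) ^ k * D 1 := by
    intro k
    induction k with
    | zero => simp [hD0]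
    | succ n ih => rw [sub_succ_eq_of_cycleStep hq.ne' hsum hD, ih, pow_succ]; ring
  have hmono : Monotone D := monotone_nat_of_le_succ fun k => by
    have := hincr k
    have := mul_nonneg (pow_nonneg hr0 k) (hD_nonneg 1)
    linarith
  have hD1 : D 1 = 0 := by
    refine le_antisymm (ge_of_tendsto (tendsto_pow_atTop_nhds_zero_of_lt_one hr0 hr1) ?_)
      (hD_nonneg 1)
    filter_upwards [eventually_ge_atTop 1] with k hk
    exact (hmono hk).trans (hD_le k)
  funext k
  induction k with
  | zero => exact hD0
  | succ n ih =>
    have := hincr n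
    simp only [Pi.zero_apply] at ih ⊢
    rw [hD1, mul_zero, ih] at this
    linarith

lemma le_of_cycleStep (hp : 0 ≤ p) (hq : 0 ≤ q) {G H : ℕ → ℕ → ℝ} (h0 : G 0 ≤ H 0)
    (h_bdry : ∀ m, G (m + 1) 0 ≤ H (m + 1) 0)
    (hG : ∀ m k, G (m + 1) (k + 1) ≤ cycleStep p q (G m) k)
    (hH : ∀ m k, cycleStep p q (H m) k ≤ H (m + 1) (k + 1)) (m : ℕ) : G m ≤ H m := by
  induction m with
  | zero => exact h0
  | succ m ih =>
    rintro (_ | k)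
    · exact h_bdry m
    · exact (hG m k).trans ((cycleStep_mono hp hq ih k).trans (hH m k))

end CycleStep

section TailRecursion

variable {p q : ℝ} {F : ℕ → ℕ → ℝ}

lemma nonneg_of_cycleStep (hp : 0 ≤ p) (hq : 0 ≤ q) (hF0 : ∀ m, F m 0 = 1)
    (hFinit : ∀ k, F 0 (k + 1) = 0) (hF : ∀ m k, F (m + 1) (k + 1) = cycleStep p q (F m) k)
    (m : ℕ) : 0 ≤ F m :=
  le_of_cycleStep (G := 0) hp hq (by rintro (_ | k) <;> simp [hF0, hFinit])
    (fun m => by simp [hF0]) (fun m k => by simp [cycleStep]) (fun m k => (hF m k).ge) m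

lemma le_succ_of_cycleStep (hp : 0 ≤ p) (hq : 0 ≤ q) (hF0 : ∀ m, F m 0 = 1)
    (hFinit : ∀ k, F 0 (k + 1) = 0) (hF : ∀ m k, F (m + 1) (k + 1) = cycleStep p q (F m) k)
    (m : ℕ) : F m ≤ F (m + 1) :=
  le_of_cycleStep (H := fun m => F (m + 1)) hp hq
    (by
      rintro (_ | k)
      · simp [hF0]
      · simpa [hFinit] using nonneg_of_cycleStep hp hq hF0 hFinit hF 1 (k + 1))
    (fun m => by simp [hF0]) (fun m k => (hF m k).le) (fun m k => (hF (m + 1) k).ge) m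

lemma le_ratio_pow_of_cycleStep (hp : 0 ≤ p) (hpq : p < q) (hsum : p + q = 1)
    (hF0 : ∀ m, F m 0 = 1) (hFinit : ∀ k, F 0 (k + 1) = 0)
    (hF : ∀ m k, F (m + 1) (k + 1) = cycleStep p q (F m) k) (m k : ℕ) :
    F m k ≤ ((p / q) ^ 2) ^ k :=
  le_of_cycleStep (H := fun _ k => ((p / q) ^ 2) ^ k) hp (by linarith)
    (by rintro (_ | k) <;> simp [hF0, hFinit]; positivity)
    (fun m => by simp [hF0]) (fun m k => (hF m k).le)
    (fun m k => (cycleStep_ratio_pow (by linarith) hsum k).le) m k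

lemma tendsto_ratio_pow_of_cycleStep (hp : 0 ≤ p) (hpq : p < q) (hsum : p + q = 1)
    (hF0 : ∀ m, F m 0 = 1) (hFinit : ∀ k, F 0 (k + 1) = 0)
    (hF : ∀ m k, F (m + 1) (k + 1) = cycleStep p q (F m) k) (k : ℕ) :
    Tendsto (fun m => F m k) atTop (𝓝 (((p / q) ^ 2) ^ k)) := by
  have hq : 0 ≤ q := by linarith
  have hbdd : ∀ k, BddAbove (Set.range fun m => F m k) := fun k =>
    ⟨_, Set.forall_mem_range.2 fun m => le_ratio_pow_of_cycleStep hp hpq hsum hF0 hFinit hF m k⟩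
  set L : ℕ → ℝ := fun k => ⨆ m, F m k
  have hL : ∀ k, Tendsto (fun m => F m k) atTop (𝓝 (L k)) := fun k =>
    tendsto_atTop_ciSup (monotone_nat_of_le_succ fun m =>
      le_succ_of_cycleStep hp hq hF0 hFinit hF m k) (hbdd k)
  have hL_step : ∀ k, L (k + 1) = cycleStep p q L k := fun k =>
    tendsto_nhds_unique ((hL (k + 1)).comp (tendsto_add_atTop_nat 1))
      ((((hL k).const_mul _).add ((hL (k + 1)).const_mul _)).add ((hL (k + 2)).const_mul _)
        |>.congr fun m => (hF m k).symm)
  suffices hD : (fun k => ((p / q) ^ 2) ^ k) - L = 0 by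
    simpa [sub_eq_zero.1 (congrFun hD k)] using hL k
  refine eq_zero_of_cycleStep hp hpq hsum (fun k => ?_) ?_ (fun k => ?_) (fun k => ?_)
  · rw [cycleStep_sub, cycleStep_ratio_pow (by linarith) hsum, ← hL_step]
    rfl
  · simp [L, hF0]
  · exact sub_nonneg.2 (ciSup_le fun m => le_ratio_pow_of_cycleStep hp hpq hsum hF0 hFinit hF m k)
  · exact sub_le_self _ (le_ciSup_of_le (hbdd k) 0 (nonneg_of_cycleStep hp hq hF0 hFinit hF 0 k))

lemma tendsto_tsum_mul_of_cycleStep (hp : 0 ≤ p) (hpq : p < q) (hsum : p + q = 1)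
    (hF0 : ∀ m, F m 0 = 1) (hFinit : ∀ k, F 0 (k + 1) = 0)
    (hF : ∀ m k, F (m + 1) (k + 1) = cycleStep p q (F m) k) {w : ℕ → ℝ} (hw : 0 ≤ w)
    (hw_sum : Summable fun k => w k * ((p / q) ^ 2) ^ (k + 1)) :
    Tendsto (fun m => ∑' k, w k * F m (k + 1)) atTop
      (𝓝 (∑' k, w k * ((p / q) ^ 2) ^ (k + 1))) := by
  refine tendsto_tsum_of_dominated_convergence hw_sum
    (fun k => (tendsto_ratio_pow_of_cycleStep hp hpq hsum hF0 hFinit hF (k + 1)).const_mul _)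
    (Eventually.of_forall fun m k => ?_)
  rw [Real.norm_eq_abs, abs_of_nonneg (mul_nonneg (hw k)
    (nonneg_of_cycleStep hp (by linarith) hF0 hFinit hF m (k + 1)))]
  exact mul_le_mul_of_nonneg_left (le_ratio_pow_of_cycleStep hp hpq hsum hF0 hFinit hF m _) (hw k)

end TailRecursion

section RatioSeries

variable {p q : ℝ}

lemma one_sub_ratio_sq (hpq : p < q) (hsum : p + q = 1) : 1 - (p / q) ^ 2 = (q - p) / q ^ 2 := by
  have hq : q ≠ 0 := by linarith
  field_simp
  linear_combination (q - p) * hsum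

lemma hasSum_ratio_sq_pow_succ (hp : 0 ≤ p) (hpq : p < q) (hsum : p + q = 1) :
    HasSum (fun k : ℕ => ((p / q) ^ 2) ^ (k + 1)) (p ^ 2 / (q - p)) := by
  obtain ⟨hr0, hr1⟩ := ratio_sq_nonneg_lt_one hp hpq
  have hq : q ≠ 0 := by linarith
  have hqp : q - p ≠ 0 := by linarith
  have hval : p ^ 2 / (q - p) = (p / q) ^ 2 * (1 - (p / q) ^ 2)⁻¹ := by
    rw [one_sub_ratio_sq hpq hsum]
    field_simp
  rw [hval]
  exact ((hasSum_geometric_of_lt_one hr0 hr1).mul_left ((p / q) ^ 2)).congr_fun fun k => by ring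

lemma hasSum_two_mul_ratio_sq_pow_succ (hp : 0 ≤ p) (hpq : p < q) (hsum : p + q = 1) :
    HasSum (fun k : ℕ => 2 * (k : ℝ) * ((p / q) ^ 2) ^ (k + 1)) (2 * p ^ 4 / (q - p) ^ 2) := by
  obtain ⟨hr0, hr1⟩ := ratio_sq_nonneg_lt_one hp hpq
  have hq : q ≠ 0 := by linarith
  have hqp : q - p ≠ 0 := by linarith
  have hval : 2 * p ^ 4 / (q - p) ^ 2
      = 2 * (p / q) ^ 2 * ((p / q) ^ 2 / (1 - (p / q) ^ 2) ^ 2) := by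
    rw [one_sub_ratio_sq hpq hsum]
    field_simp
  have hr : ‖(p / q) ^ 2‖ < 1 := by rwa [Real.norm_eq_abs, abs_of_nonneg hr0]
  rw [hval]
  exact ((hasSum_coe_mul_geometric_of_norm_lt_one hr).mul_left (2 * (p / q) ^ 2)).congr_fun
    fun k => by ring

end RatioSeries

lemma ProbabilityTheory.IndepFun.measureReal_inter_preimage_eq_mul {Ω α β : Type*}
    [MeasurableSpace Ω] [MeasurableSpace α] [MeasurableSpace β] {μ : Measure Ω}
    {f : Ω → α} {g : Ω → β} (hfg : IndepFun f g μ) {s : Set α} {t : Set β}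
    (hs : MeasurableSet s) (ht : MeasurableSet t) :
    μ.real (f ⁻¹' s ∩ g ⁻¹' t) = μ.real (f ⁻¹' s) * μ.real (g ⁻¹' t) := by
  simp only [measureReal_def, hfg.measure_inter_preimage_eq_mul s t hs ht, ENNReal.toReal_mul]

section TwoPoint

variable {Ω : Type*} [MeasurableSpace Ω] {μ : Measure Ω}

def HasTwoPointLaw (μ : Measure Ω) (Y : Ω → ℤ) (a b : ℤ) (P Q : ℝ) : Prop :=
  (∀ᵐ ω ∂μ, Y ω = a ∨ Y ω = b) ∧ μ.real {ω | Y ω = a} = P ∧ μ.real {ω | Y ω = b} = Q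

lemma hasTwoPointLaw_of_measure_eq [IsProbabilityMeasure μ] {Y : Ω → ℤ} (hY : Measurable Y)
    {a b : ℤ} (hab : a ≠ b) {P Q : ℝ} (hP : 0 ≤ P) (hQ : 0 ≤ Q) (hPQ : P + Q = 1)
    (ha : μ {ω | Y ω = a} = ENNReal.ofReal P) (hb : μ {ω | Y ω = b} = ENNReal.ofReal Q) :
    HasTwoPointLaw μ Y a b P Q := by
  have hmeas : ∀ c : ℤ, MeasurableSet {ω | Y ω = c} := fun c => hY (measurableSet_singleton c)
  have hdisj : Disjoint {ω | Y ω = a} {ω | Y ω = b} :=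
    Set.disjoint_left.2 fun ω ha hb => hab (ha.symm.trans hb)
  refine ⟨?_, by simp [measureReal_def, ha, hP], by simp [measureReal_def, hb, hQ]⟩
  change μ ({ω | Y ω = a} ∪ {ω | Y ω = b})ᶜ = 0
  rw [prob_compl_eq_zero_iff ((hmeas a).union (hmeas b)),
    measure_union hdisj (hmeas b), ha, hb, ← ENNReal.ofReal_add hP hQ, hPQ, ENNReal.ofReal_one]

lemma measureReal_le_max_add_zero [IsFiniteMeasure μ] {Z Y : Ω → ℤ} (hZ : Measurable Z)
    (hY : Measurable Y) (hZY : IndepFun Z Y μ) {a b : ℤ} (hab : a ≠ b) {P Q : ℝ}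
    (hlaw : HasTwoPointLaw μ Y a b P Q) {c : ℤ} (hc : 0 < c) :
    μ.real {ω | c ≤ max (Z ω + Y ω) 0} =
      P * μ.real {ω | c - a ≤ Z ω} + Q * μ.real {ω | c - b ≤ Z ω} := by
  obtain ⟨hae, rfl, rfl⟩ := hlaw
  have hsplit : {ω | c ≤ max (Z ω + Y ω) 0} =ᵐ[μ]
      (Z ⁻¹' Set.Ici (c - a) ∩ Y ⁻¹' {a} ∪ Z ⁻¹' Set.Ici (c - b) ∩ Y ⁻¹' {b} : Set Ω) := by
    rw [eventuallyEq_set]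
    filter_upwards [hae] with ω hω
    simp only [Set.mem_union, Set.mem_inter_iff, Set.mem_preimage,
      Set.mem_Ici, Set.mem_singleton_iff, le_max_iff]
    omega
  have hdisj : Disjoint (Z ⁻¹' Set.Ici (c - a) ∩ Y ⁻¹' {a}) (Z ⁻¹' Set.Ici (c - b) ∩ Y ⁻¹' {b}) :=
    Set.disjoint_left.2 fun ω h₁ h₂ => hab (h₁.2.symm.trans h₂.2)
  rw [measureReal_congr hsplit,
    measureReal_union hdisj ((hZ measurableSet_Ici).inter (hY (measurableSet_singleton b))),
    hZY.measureReal_inter_preimage_eq_mul measurableSet_Ici (measurableSet_singleton a),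
    hZY.measureReal_inter_preimage_eq_mul measurableSet_Ici (measurableSet_singleton b)]
  simp only [Set.preimage, Set.mem_Ici, Set.mem_singleton_iff]
  ring

end TwoPoint

def tailProb {Ω : Type*} [MeasurableSpace Ω] (μ : Measure Ω) (Z : Ω → ℤ) (k : ℕ) : ℝ :=
  μ.real {ω | (k : ℤ) ≤ Z ω}

section ReflectedWalk

variable {Ω : Type*} {X S : ℕ → Ω → ℤ}

lemma reflected_nonneg (hS0 : ∀ ω, S 0 ω = 0)
    (hS : ∀ j ω, S (j + 1) ω = max (S j ω + X (j + 1) ω) 0) (j : ℕ) (ω : Ω) : 0 ≤ S j ω := by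
  cases j with
  | zero => rw [hS0]
  | succ j => rw [hS]; exact le_max_right _ _

lemma exists_measurable_reflected_eq_comp (hS0 : ∀ ω, S 0 ω = 0)
    (hS : ∀ j ω, S (j + 1) ω = max (S j ω + X (j + 1) ω) 0) (j : ℕ) :
    ∃ g : (Finset.range (j + 1) → ℤ) → ℤ, Measurable g ∧
      S j = g ∘ fun ω (i : Finset.range (j + 1)) => X i ω := by
  induction j with
  | zero => exact ⟨fun _ => 0, measurable_const, funext hS0⟩
  | succ j ih =>
    obtain ⟨g, hg, hgS⟩ := ih
    let restrict (v : Finset.range (j + 2) → ℤ) (i : Finset.range (j + 1)) : ℤ :=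
      v ⟨i, Finset.mem_range.2 (Nat.lt_succ_of_lt (Finset.mem_range.1 i.2))⟩
    refine ⟨fun v => max (g (restrict v) + v ⟨j + 1, Finset.self_mem_range_succ _⟩) 0, ?_, ?_⟩
    · exact ((hg.comp (measurable_pi_lambda _ fun i => measurable_pi_apply _)).add
        (measurable_pi_apply _)).max measurable_const
    · funext ω
      rw [hS, hgS]
      rfl

variable [MeasurableSpace Ω] {μ : Measure Ω}

lemma measurable_reflected (hX : ∀ i, Measurable (X i)) (hS0 : ∀ ω, S 0 ω = 0)
    (hS : ∀ j ω, S (j + 1) ω = max (S j ω + X (j + 1) ω) 0) (j : ℕ) : Measurable (S j) := by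
  obtain ⟨g, hg, hgS⟩ := exists_measurable_reflected_eq_comp hS0 hS j
  exact hgS ▸ hg.comp (measurable_pi_lambda _ fun i => hX i)

lemma indepFun_reflected_succ (hX : ∀ i, Measurable (X i)) (hXindep : iIndepFun X μ)
    (hS0 : ∀ ω, S 0 ω = 0) (hS : ∀ j ω, S (j + 1) ω = max (S j ω + X (j + 1) ω) 0) (j : ℕ) :
    IndepFun (S j) (X (j + 1)) μ := by
  obtain ⟨g, hg, hgS⟩ := exists_measurable_reflected_eq_comp hS0 hS j
  have hdisj : Disjoint (Finset.range (j + 1)) {j + 1} := by simp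
  rw [hgS]
  exact (hXindep.indepFun_finset _ _ hdisj hX).comp hg
    (measurable_pi_apply ⟨j + 1, Finset.mem_singleton_self _⟩)

lemma reflected_le_ae (hS0 : ∀ ω, S 0 ω = 0)
    (hS : ∀ j ω, S (j + 1) ω = max (S j ω + X (j + 1) ω) 0)
    (hX : ∀ i, ∀ᵐ ω ∂μ, X (i + 1) ω ≤ 1) (j : ℕ) : ∀ᵐ ω ∂μ, S j ω ≤ j := by
  induction j with
  | zero => exact Eventually.of_forall fun ω => (hS0 ω).le
  | succ j ih =>
    filter_upwards [ih, hX j] with ω hSj hXj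
    rw [hS]
    push_cast
    omega

lemma ae_le_one_of_hasTwoPointLaw_cycle {p q : ℝ}
    (hodd : ∀ m, HasTwoPointLaw μ (X (2 * m + 1)) 1 0 p q)
    (heven : ∀ m, HasTwoPointLaw μ (X (2 * m + 2)) 0 (-1) p q) (i : ℕ) :
    ∀ᵐ ω ∂μ, X (i + 1) ω ≤ 1 := by
  obtain ⟨m, rfl | rfl⟩ := Nat.even_or_odd' i
  · filter_upwards [(hodd m).1] with ω hω using by omega
  · rw [show 2 * m + 1 + 1 = 2 * m + 2 from rfl]
    filter_upwards [(heven m).1] with ω hω using by omega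

lemma measureReal_le_reflected_succ [IsFiniteMeasure μ] (hX : ∀ i, Measurable (X i))
    (hXindep : iIndepFun X μ) (hS0 : ∀ ω, S 0 ω = 0)
    (hS : ∀ j ω, S (j + 1) ω = max (S j ω + X (j + 1) ω) 0) {j : ℕ} {a b : ℤ} (hab : a ≠ b)
    {P Q : ℝ} (hlaw : HasTwoPointLaw μ (X (j + 1)) a b P Q) {c : ℤ} (hc : 0 < c) :
    μ.real {ω | c ≤ S (j + 1) ω} =
      P * μ.real {ω | c - a ≤ S j ω} + Q * μ.real {ω | c - b ≤ S j ω} := by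
  simp only [hS]
  exact measureReal_le_max_add_zero (measurable_reflected hX hS0 hS j) (hX _)
    (indepFun_reflected_succ hX hXindep hS0 hS j) hab hlaw hc

lemma tailProb_reflected_cycle [IsFiniteMeasure μ] (hX : ∀ i, Measurable (X i))
    (hXindep : iIndepFun X μ) (hS0 : ∀ ω, S 0 ω = 0)
    (hS : ∀ j ω, S (j + 1) ω = max (S j ω + X (j + 1) ω) 0) {p q : ℝ} {m : ℕ}
    (hodd : HasTwoPointLaw μ (X (2 * m + 1)) 1 0 p q)
    (heven : HasTwoPointLaw μ (X (2 * m + 2)) 0 (-1) p q) (k : ℕ) :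
    tailProb μ (S (2 * (m + 1))) (k + 1) = cycleStep p q (tailProb μ (S (2 * m))) k := by
  have hodd_step : ∀ n : ℕ, μ.real {ω | (n : ℤ) + 1 ≤ S (2 * m + 1) ω} =
      p * tailProb μ (S (2 * m)) n + q * tailProb μ (S (2 * m)) (n + 1) := fun n => by
    rw [measureReal_le_reflected_succ hX hXindep hS0 hS one_ne_zero hodd (by positivity)]
    simp [tailProb]
  have heven_step := measureReal_le_reflected_succ hX hXindep hS0 hS (j := 2 * m + 1)
    (by norm_num) heven (c := (k : ℤ) + 1) (by positivity)
  simp only [sub_zero, sub_neg_eq_add, add_assoc, one_add_one_eq_two] at heven_step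
  rw [cycleStep, tailProb, mul_add, mul_one, Nat.cast_succ, heven_step, hodd_step,
    show (k : ℤ) + 2 = ((k + 1 : ℕ) : ℤ) + 1 by push_cast; ring, hodd_step]
  ring

end ReflectedWalk

section TailSum

variable {Ω : Type*} [MeasurableSpace Ω] {μ : Measure Ω} [IsFiniteMeasure μ] {Z : Ω → ℤ} {N : ℕ}

lemma integral_sum_range_toNat_eq_tsum (hZ : Measurable Z) (hN : ∀ᵐ ω ∂μ, Z ω ≤ N)
    (w : ℕ → ℝ) :
    ∫ ω, ∑ k ∈ Finset.range (Z ω).toNat, w k ∂μ = ∑' k, w k * tailProb μ Z (k + 1) := by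
  have hmeas : ∀ k : ℕ, MeasurableSet {ω | ((k + 1 : ℕ) : ℤ) ≤ Z ω} := fun k =>
    hZ measurableSet_Ici
  have hpt : (fun ω => ∑ k ∈ Finset.range (Z ω).toNat, w k) =ᵐ[μ]
      fun ω => ∑ k ∈ Finset.range N, {ω | ((k + 1 : ℕ) : ℤ) ≤ Z ω}.indicator (fun _ => w k) ω := by
    filter_upwards [hN] with ω hω
    simp only [Set.indicator_apply, Set.mem_ofPred_eq, ← Finset.sum_filter]
    congr 1
    ext k
    simp only [Finset.mem_range, Finset.mem_filter]
    omega
  rw [integral_congr_ae hpt,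
    integral_finsetSum _ fun k _ => (integrable_const (w k)).indicator (hmeas k),
    tsum_eq_sum (s := Finset.range N)]
  · refine Finset.sum_congr rfl fun k _ => ?_
    rw [integral_indicator_const _ (hmeas k), smul_eq_mul, mul_comm, tailProb]
  · intro k hk
    have hnull : μ {ω | ((k + 1 : ℕ) : ℤ) ≤ Z ω} = 0 := by
      rw [measure_eq_zero_iff_ae_notMem]
      filter_upwards [hN] with ω hω
      simp only [Finset.mem_range] at hk
      simp only [not_le]
      omega
    rw [tailProb, (measureReal_eq_zero_iff).2 hnull, mul_zero]

lemma integral_eq_tsum_tailProb (hZ : Measurable Z) (h0 : ∀ ω, 0 ≤ Z ω)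
    (hN : ∀ᵐ ω ∂μ, Z ω ≤ N) : ∫ ω, (Z ω : ℝ) ∂μ = ∑' k, tailProb μ Z (k + 1) := by
  have h := integral_sum_range_toNat_eq_tsum hZ hN (fun _ => 1)
  simp only [Finset.sum_const, Finset.card_range, nsmul_eq_mul, mul_one, one_mul] at h
  rw [← h]
  congr with ω
  exact_mod_cast (Int.toNat_of_nonneg (h0 ω)).symm

lemma integral_mul_sub_one_eq_tsum_tailProb (hZ : Measurable Z) (h0 : ∀ ω, 0 ≤ Z ω)
    (hN : ∀ᵐ ω ∂μ, Z ω ≤ N) :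
    ∫ ω, (Z ω : ℝ) * ((Z ω : ℝ) - 1) ∂μ = ∑' k : ℕ, 2 * (k : ℝ) * tailProb μ Z (k + 1) := by
  have hsum : ∀ n : ℕ, ∑ k ∈ Finset.range n, 2 * (k : ℝ) = n * (n - 1) := fun n => by
    induction n with
    | zero => simp
    | succ n ih => rw [Finset.sum_range_succ, ih]; push_cast; ring
  rw [← integral_sum_range_toNat_eq_tsum hZ hN]
  congr with ω
  rw [hsum, ← Int.cast_natCast, Int.toNat_of_nonneg (h0 ω)]

end TailSum

/-- For 0 < p < 1/2 and the ℓ = 1 walk, E(S_{2m}) → p²/(q-p)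
and E(S_{2m}(S_{2m}-1)) → 2p⁴/(q-p)². -/
theorem maxQueue_stationary_moments_ell_one
    (p q : ℝ) (hp : 0 < p) (hpq : p < 1 / 2) (hq : q = 1 - p)
    {Ω : Type*} [MeasurableSpace Ω] (μ : Measure Ω) [IsProbabilityMeasure μ]
    (X : ℕ → Ω → ℤ) (hXmeas : ∀ i, Measurable (X i))
    (hXindep : iIndepFun X μ)
    (hXodd : ∀ i : ℕ, Odd i →
      μ {ω | X i ω = 1} = ENNReal.ofReal p ∧ μ {ω | X i ω = 0} = ENNReal.ofReal q)
    (hXeven : ∀ i : ℕ, 1 ≤ i → Even i →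
      μ {ω | X i ω = 0} = ENNReal.ofReal p ∧ μ {ω | X i ω = -1} = ENNReal.ofReal q)
    (S : ℕ → Ω → ℤ) (hS0 : ∀ ω, S 0 ω = 0)
    (hS : ∀ (j : ℕ) (ω : Ω), S (j + 1) ω = max (S j ω + X (j + 1) ω) 0) :
    Tendsto (fun m : ℕ => ∫ ω, ((S (2 * m) ω : ℤ) : ℝ) ∂μ) atTop
      (nhds (p ^ 2 / (q - p))) ∧
    Tendsto (fun m : ℕ => ∫ ω, ((S (2 * m) ω : ℤ) : ℝ) * (((S (2 * m) ω : ℤ) : ℝ) - 1) ∂μ)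
      atTop (nhds (2 * p ^ 4 / (q - p) ^ 2)) := by
  have hsum : p + q = 1 := by linarith
  have hlt : p < q := by linarith
  have hodd : ∀ m, HasTwoPointLaw μ (X (2 * m + 1)) 1 0 p q := fun m =>
    have h := hXodd _ (odd_two_mul_add_one m)
    hasTwoPointLaw_of_measure_eq (hXmeas _) one_ne_zero hp.le (by linarith) hsum h.1 h.2
  have heven : ∀ m, HasTwoPointLaw μ (X (2 * m + 2)) 0 (-1) p q := fun m =>
    have h := hXeven _ (by omega) ⟨m + 1, by ring⟩
    hasTwoPointLaw_of_measure_eq (hXmeas _) (by norm_num) hp.le (by linarith) hsum h.1 h.2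
  set F : ℕ → ℕ → ℝ := fun m => tailProb μ (S (2 * m))
  have hF0 : ∀ m, F m 0 = 1 := fun m => by simp [F, tailProb, reflected_nonneg hS0 hS]
  have hFinit : ∀ k, F 0 (k + 1) = 0 := fun k => by
    simp [F, tailProb, hS0, not_lt.2 (Int.natCast_nonneg k)]
  have hF : ∀ m k, F (m + 1) (k + 1) = cycleStep p q (F m) k := fun m k =>
    tailProb_reflected_cycle hXmeas hXindep hS0 hS (hodd m) (heven m) k
  have hS_meas := fun m => measurable_reflected hXmeas hS0 hS (2 * m)
  have hS_le := fun m =>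
    reflected_le_ae hS0 hS (ae_le_one_of_hasTwoPointLaw_cycle hodd heven) (2 * m)
  constructor
  · rw [funext fun m =>
        integral_eq_tsum_tailProb (hS_meas m) (reflected_nonneg hS0 hS _) (hS_le m),
      ← (hasSum_ratio_sq_pow_succ hp.le hlt hsum).tsum_eq]
    simpa only [one_mul] using tendsto_tsum_mul_of_cycleStep hp.le hlt hsum hF0 hFinit hF
      (w := fun _ => 1) (fun _ => zero_le_one)
      (by simpa only [one_mul] using (hasSum_ratio_sq_pow_succ hp.le hlt hsum).summable)
  · rw [funext fun m => integral_mul_sub_one_eq_tsum_tailProb (hS_meas m)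
        (reflected_nonneg hS0 hS _) (hS_le m),
      ← (hasSum_two_mul_ratio_sq_pow_succ hp.le hlt hsum).tsum_eq]
    exact tendsto_tsum_mul_of_cycleStep hp.le hlt hsum hF0 hFinit hF
      (fun k => by positivity) (hasSum_two_mul_ratio_sq_pow_succ hp.le hlt hsum).summable
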